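/- The hereditarily finite sets HF form a transitive model of RST: HF is transitive, and HF satisfies extensionality, the comprehension schema for all formulas φ with φ ≻_RST {x} (i.e., for each such φ with parameters in HF, the set {x | φ} as computed in HF is an element of HF), and ∈-induction. -/

import Mathlib

mutual
/-- Terms of the language of RST: variables and class terms `{x | φ}`. -/
inductive RTerm : Type
  | var : ℕ → RTerm
  | cls : ℕ → RFormula → RTerm

/-- Formulas of the language of RST. -/
inductive RFormula : Type
  | mem : RTerm → RTerm → RFormula
  | eq  : RTerm → RTerm → RFormula
  | not : RFormula → RFormula
  | and : RFormula → RFormula → RFormula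
  | or  : RFormula → RFormula → RFormula
  | ex  : ℕ → RFormula → RFormula
end

mutual
/-- Free variables of a term. -/
def RTerm.fv : RTerm → Finset ℕ
  | .var n => {n}
  | .cls x φ => φ.fv.erase x

/-- Free variables of a formula. -/
def RFormula.fv : RFormula → Finset ℕ
  | .mem t s => t.fv ∪ s.fv
  | .eq t s => t.fv ∪ s.fv
  | .not φ => φ.fv
  | .and φ ψ => φ.fv ∪ ψ.fv
  | .or φ ψ => φ.fv ∪ ψ.fv
  | .ex x φ => φ.fv.erase x
end

/-- The safety relation `≻_RST`. -/
inductive Safe : RFormula → Finset ℕ → Prop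
  | atom_mem (t s : RTerm) : Safe (.mem t s) ∅
  | atom_eq (t s : RTerm) : Safe (.eq t s) ∅
  | eq_left (x : ℕ) (t : RTerm) : x ∉ t.fv → Safe (.eq (.var x) t) {x}
  | eq_right (x : ℕ) (t : RTerm) : x ∉ t.fv → Safe (.eq t (.var x)) {x}
  | mem_left (x : ℕ) (t : RTerm) : x ∉ t.fv → Safe (.mem (.var x) t) {x}
  | mem_self (x : ℕ) : Safe (.mem (.var x) (.var x)) {x}
  | not (φ : RFormula) : Safe φ ∅ → Safe (.not φ) ∅
  | or (φ ψ : RFormula) (X : Finset ℕ) : Safe φ X → Safe ψ X → Safe (.or φ ψ) X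
  | and (φ ψ : RFormula) (X Y : Finset ℕ) :
      Safe φ X → Safe ψ Y → Y ∩ φ.fv = ∅ → Safe (.and φ ψ) (X ∪ Y)
  | ex (y : ℕ) (φ : RFormula) (X : Finset ℕ) :
      y ∈ X → Safe φ X → Safe (.ex y φ) (X \ {y})

mutual
/-- Well-formed terms of RST: the body of a class term must be safe for its variable. -/
inductive WFTerm : RTerm → Prop
  | var (n : ℕ) : WFTerm (.var n)
  | cls (x : ℕ) (φ : RFormula) : WFForm φ → Safe φ {x} → WFTerm (.cls x φ)

/-- Well-formed formulas of RST. -/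
inductive WFForm : RFormula → Prop
  | mem {t s : RTerm} : WFTerm t → WFTerm s → WFForm (.mem t s)
  | eq {t s : RTerm} : WFTerm t → WFTerm s → WFForm (.eq t s)
  | not {φ : RFormula} : WFForm φ → WFForm (.not φ)
  | and {φ ψ : RFormula} : WFForm φ → WFForm ψ → WFForm (.and φ ψ)
  | or {φ ψ : RFormula} : WFForm φ → WFForm ψ → WFForm (.or φ ψ)
  | ex (x : ℕ) {φ : RFormula} : WFForm φ → WFForm (.ex x φ)
end
open scoped Classical

mutual
/-- Evaluation of a term in the cumulative universe `V` (modelled by `ZFSet`);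
a class term denotes the set which has exactly the members specified by its body,
if such a set exists, and `∅` otherwise. -/
noncomputable def RTerm.eval : RTerm → (ℕ → ZFSet.{0}) → ZFSet.{0}
  | .var n, v => v n
  | .cls x φ, v =>
      if h : ∃ s : ZFSet, ∀ z : ZFSet, z ∈ s ↔ (RFormula.sat' φ (Function.update v x z)).down.down then
        h.choose
      else ∅

/-- Satisfaction of a formula in the cumulative universe `V` (wrapped in `ULift (PLift _)`
so that it lives in the same universe as `ZFSet`). -/
noncomputable def RFormula.sat' : RFormula → (ℕ → ZFSet.{0}) → ULift.{1} (PLift Prop)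
  | .mem t s, v => ⟨⟨t.eval v ∈ s.eval v⟩⟩
  | .eq t s, v => ⟨⟨t.eval v = s.eval v⟩⟩
  | .not φ, v => ⟨⟨¬ (φ.sat' v).down.down⟩⟩
  | .and φ ψ, v => ⟨⟨(φ.sat' v).down.down ∧ (ψ.sat' v).down.down⟩⟩
  | .or φ ψ, v => ⟨⟨(φ.sat' v).down.down ∨ (ψ.sat' v).down.down⟩⟩
  | .ex x φ, v => ⟨⟨∃ z : ZFSet.{0}, (φ.sat' (Function.update v x z)).down.down⟩⟩
end

/-- Satisfaction of a formula of RST in the cumulative universe `V`. -/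
noncomputable def RFormula.sat (φ : RFormula) (v : ℕ → ZFSet.{0}) : Prop := (φ.sat' v).down.down

mutual
/-- Relativization to a transitive set `M`: evaluation of terms, where the class term
`{x ∣ φ}` is relativized to `{x ∣ x ∈ M ∧ φ_M}`. -/
noncomputable def RTerm.evalIn (M : ZFSet.{0}) : RTerm → (ℕ → ZFSet.{0}) → ZFSet.{0}
  | .var n, v => v n
  | .cls x φ, v => ZFSet.sep (fun z => (RFormula.satIn' M φ (Function.update v x z)).down.down) M

/-- Relativization to `M` of satisfaction: quantifiers are bounded to `M`. -/
noncomputable def RFormula.satIn' (M : ZFSet.{0}) : RFormula → (ℕ → ZFSet.{0}) → ULift.{1} (PLift Prop)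
  | .mem t s, v => ⟨⟨RTerm.evalIn M t v ∈ RTerm.evalIn M s v⟩⟩
  | .eq t s, v => ⟨⟨RTerm.evalIn M t v = RTerm.evalIn M s v⟩⟩
  | .not φ, v => ⟨⟨¬ (RFormula.satIn' M φ v).down.down⟩⟩
  | .and φ ψ, v => ⟨⟨(RFormula.satIn' M φ v).down.down ∧ (RFormula.satIn' M ψ v).down.down⟩⟩
  | .or φ ψ, v => ⟨⟨(RFormula.satIn' M φ v).down.down ∨ (RFormula.satIn' M ψ v).down.down⟩⟩
  | .ex x φ, v => ⟨⟨∃ z : ZFSet.{0}, z ∈ M ∧ (RFormula.satIn' M φ (Function.update v x z)).down.down⟩⟩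
end

/-- The relativization `φ_M` of a formula `φ` to `M`, as a satisfaction relation. -/
noncomputable def RFormula.satIn (M : ZFSet.{0}) (φ : RFormula) (v : ℕ → ZFSet.{0}) : Prop :=
  (φ.satIn' M v).down.down

/-- The finite levels of the cumulative hierarchy. -/
noncomputable def Vfin : ℕ → ZFSet.{0}
  | 0 => ∅
  | n + 1 => ZFSet.powerset (Vfin n)

/-- The set `HF = V_ω` of hereditarily finite sets. -/
noncomputable def HF : ZFSet.{0} := ZFSet.sUnion (ZFSet.range Vfin)

/-!
Every element of `HF` is a finite subset of `HF`, and conversely; so comprehension holds in `HF`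
as soon as a safe formula has only finitely many solutions in `HF`. This is proved by induction on
the safety derivation: if `φ ≻ X`, then for fixed values of the variables outside `X` the
valuations in `HF` satisfying `φ` form a finite set. Simultaneously, every well-formed term
evaluates to an element of `HF`, which handles the atom `x ∈ t`. Transitivity comes from that of
the finite levels `Vfin n`, and extensionality and `∈`-induction are inherited from `ZFSet`.
-/

open Function

theorem isTransitive_Vfin : ∀ n, (Vfin n).IsTransitive
  | 0 => ZFSet.isTransitive_empty
  | n + 1 => (isTransitive_Vfin n).powerset

theorem monotone_Vfin : Monotone fun n => (Vfin n : Set ZFSet.{0}) :=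
  monotone_nat_of_le_succ fun n => ZFSet.coe_subset_coe.2 (isTransitive_Vfin n).subset_powerset

theorem finite_Vfin : ∀ n, (Vfin n : Set ZFSet.{0}).Finite
  | 0 => by simp [Vfin]
  | n + 1 => by
    refine Set.Finite.of_finite_image ((finite_Vfin n).finite_subsets.subset ?_)
      SetLike.coe_injective.injOn
    rintro _ ⟨y, hy, rfl⟩
    exact ZFSet.coe_subset_coe.2 (ZFSet.mem_powerset.1 hy)

theorem mem_HF {z : ZFSet.{0}} : z ∈ HF ↔ ∃ n, z ∈ Vfin n := ZFSet.mem_iUnion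

theorem isTransitive_HF : HF.IsTransitive := ZFSet.IsTransitive.iUnion isTransitive_Vfin

theorem finite_of_mem_HF {z : ZFSet.{0}} (hz : z ∈ HF) : (z : Set ZFSet.{0}).Finite := by
  obtain ⟨n, hn⟩ := mem_HF.1 hz
  exact (finite_Vfin n).subset (ZFSet.coe_subset_coe.2 ((isTransitive_Vfin n).subset_of_mem hn))

theorem mem_HF_of_finite {A : ZFSet.{0}} (hA : ∀ z ∈ A, z ∈ HF)
    (hfin : (A : Set ZFSet.{0}).Finite) : A ∈ HF := by
  have hcover : (hfin.toFinset : Set ZFSet.{0}) ⊆ ⋃ n, (Vfin n : Set ZFSet.{0}) := by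
    intro z hz
    simpa [mem_HF] using hA z (by simpa using hz)
  obtain ⟨N, hN⟩ := monotone_Vfin.directed_le.exists_mem_subset_of_finset_subset_biUnion hcover
  refine mem_HF.2 ⟨N + 1, ZFSet.mem_powerset.2 fun z hz => hN ?_⟩
  simpa using hz

theorem ZFSet.IsTransitive.mem_induction {M : ZFSet} (hM : M.IsTransitive) {p : ZFSet → Prop}
    (h : ∀ x ∈ M, (∀ y ∈ x, p y) → p x) : ∀ x ∈ M, p x := by
  intro x
  induction x using ZFSet.inductionOn with
  | _ x IH => exact fun hx => h x hx fun y hy => IH y hy (hM x hx hy)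

section Congruence

theorem Set.EqOn.update_of_erase {v w : ℕ → ZFSet.{0}} {s : Finset ℕ} {x : ℕ}
    (h : Set.EqOn v w ↑(s.erase x)) (z : ZFSet.{0}) :
    Set.EqOn (update v x z) (update w x z) ↑s := by
  intro n hn
  rcases eq_or_ne n x with rfl | hnx
  · simp
  · simpa [hnx] using h (Finset.mem_erase.2 ⟨hnx, hn⟩)

variable (M : ZFSet.{0})

mutual
theorem RTerm.evalIn_congr : ∀ (t : RTerm) {v w : ℕ → ZFSet.{0}},
    Set.EqOn v w ↑t.fv → t.evalIn M v = t.evalIn M w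
  | .var n, _, _, h => h (by simp [RTerm.fv])
  | .cls x φ, _, _, h => by
    simp only [RTerm.evalIn]
    congr 1
    funext z
    exact propext (RFormula.satIn_congr φ (h.update_of_erase z))

theorem RFormula.satIn_congr : ∀ (φ : RFormula) {v w : ℕ → ZFSet.{0}},
    Set.EqOn v w ↑φ.fv → (φ.satIn M v ↔ φ.satIn M w)
  | .mem t s, _, _, h | .eq t s, _, _, h => by
    simp only [RFormula.fv, Finset.coe_union] at h
    simp only [RFormula.satIn, RFormula.satIn']
    rw [RTerm.evalIn_congr t (h.mono Set.subset_union_left),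
      RTerm.evalIn_congr s (h.mono Set.subset_union_right)]
  | .not φ, _, _, h => not_congr (RFormula.satIn_congr φ h)
  | .and φ ψ, _, _, h => by
    simp only [RFormula.fv, Finset.coe_union] at h
    exact and_congr (RFormula.satIn_congr φ (h.mono Set.subset_union_left))
      (RFormula.satIn_congr ψ (h.mono Set.subset_union_right))
  | .or φ ψ, _, _, h => by
    simp only [RFormula.fv, Finset.coe_union] at h
    exact or_congr (RFormula.satIn_congr φ (h.mono Set.subset_union_left))
      (RFormula.satIn_congr ψ (h.mono Set.subset_union_right))
  | .ex x φ, _, _, h =>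
    exists_congr fun z => and_congr_right fun _ => RFormula.satIn_congr φ (h.update_of_erase z)
end

end Congruence

section Solutions

def hfSolutions (φ : RFormula) (X : Finset ℕ) (v : ℕ → ZFSet.{0}) : Set (ℕ → ZFSet.{0}) :=
  {w | (∀ n ∉ X, w n = v n) ∧ (∀ n, w n ∈ HF) ∧ φ.satIn HF w}

variable {φ ψ : RFormula} {X Y : Finset ℕ} {v w : ℕ → ZFSet.{0}}

theorem finite_hfSolutions_empty : (hfSolutions φ ∅ v).Finite :=
  (Set.finite_singleton v).subset fun _ hw =>
    funext fun n => hw.1 n (Finset.notMem_empty n)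

theorem RTerm.evalIn_eq_of_mem_hfSolutions {t : RTerm} (ht : Disjoint t.fv X)
    (hw : w ∈ hfSolutions φ X v) : t.evalIn HF w = t.evalIn HF v :=
  t.evalIn_congr HF fun _ hn => hw.1 _ (Finset.disjoint_left.1 ht hn)

theorem eq_update_of_mem_hfSolutions_singleton {x : ℕ} (hw : w ∈ hfSolutions φ {x} v) :
    w = update v x (w x) :=
  funext fun n => by
    rcases eq_or_ne n x with rfl | hnx
    · simp
    · simpa [hnx] using hw.1 n (by simpa using hnx)

theorem finite_hfSolutions_singleton {x : ℕ} {S : Set ZFSet.{0}} (hS : S.Finite)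
    (h : ∀ w ∈ hfSolutions φ {x} v, w x ∈ S) : (hfSolutions φ {x} v).Finite :=
  (hS.image (update v x)).subset fun w hw =>
    ⟨w x, h w hw, (eq_update_of_mem_hfSolutions_singleton hw).symm⟩

theorem sep_mem_HF_of_finite_hfSolutions (x : ℕ) (hv : ∀ n, v n ∈ HF)
    (hfin : (hfSolutions φ {x} v).Finite) :
    ZFSet.sep (fun z => φ.satIn HF (update v x z)) HF ∈ HF := by
  refine mem_HF_of_finite (fun _ hz => (ZFSet.mem_sep.1 hz).1) ((hfin.image (· x)).subset ?_)
  intro z hz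
  obtain ⟨hzHF, hsat⟩ := ZFSet.mem_sep.1 hz
  refine ⟨update v x z, ⟨fun n hn => update_of_ne (by simpa using hn) _ _, fun n => ?_, hsat⟩,
    by simp⟩
  rcases eq_or_ne n x with rfl | hnx
  · simpa using hzHF
  · simpa [hnx] using hv n

theorem hfSolutions_or : hfSolutions (.or φ ψ) X v = hfSolutions φ X v ∪ hfSolutions ψ X v := by
  ext w
  simp only [hfSolutions, RFormula.satIn, RFormula.satIn', Set.mem_ofPred_eq, Set.mem_union]
  tauto

/-- A solution `w` of `φ ∧ ψ` is a solution of `ψ` over the solution `X.piecewise w v` of `φ`,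
which satisfies `φ` because `φ` does not mention the variables in `Y`. -/
theorem hfSolutions_and_subset (hv : ∀ n, v n ∈ HF) (hY : Y ∩ φ.fv = ∅) :
    hfSolutions (.and φ ψ) (X ∪ Y) v ⊆ ⋃ u ∈ hfSolutions φ X v, hfSolutions ψ Y u := by
  rintro w ⟨hwv, hwHF, hφ, hψ⟩
  have hXY : ∀ n ∉ X, n ∉ Y → w n = v n := fun n hX hY => hwv n (by simp [hX, hY])
  have hφu : φ.satIn HF (X.piecewise w v) := by
    refine (φ.satIn_congr HF fun n hn => ?_).1 hφ
    by_cases hX : n ∈ X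
    · simp [hX]
    · have hnY : n ∉ Y := fun hnY => by simpa [hY] using Finset.mem_inter.2 ⟨hnY, hn⟩
      simp [hX, hXY n hX hnY]
  refine Set.mem_biUnion (x := X.piecewise w v) ⟨fun n hn => by simp [hn], fun n => ?_, hφu⟩
    ⟨fun n hn => ?_, hwHF, hψ⟩
  · by_cases hX : n ∈ X <;> simp [hX, hwHF, hv]
  · by_cases hX : n ∈ X
    · simp [hX]
    · simp [hX, hXY n hX hn]

theorem hfSolutions_ex_subset {y : ℕ} (hy : y ∈ X) :
    hfSolutions (.ex y φ) (X \ {y}) v ⊆ (fun u => update u y (v y)) '' hfSolutions φ X v := by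
  rintro w ⟨hwv, hwHF, z, hzHF, hz⟩
  refine ⟨update w y z, ⟨fun n hn => ?_, fun n => ?_, hz⟩, ?_⟩
  · have hny : n ≠ y := by rintro rfl; exact hn hy
    simpa [hny] using hwv n (by simp [hn])
  · rcases eq_or_ne n y with rfl | hny
    · simpa using hzHF
    · simpa [hny] using hwHF n
  · simp only [update_idem, ← hwv y (by simp)]
    exact update_eq_self y w

end Solutions

mutual
theorem RTerm.evalIn_mem_HF : ∀ {t : RTerm}, WFTerm t → ∀ {v : ℕ → ZFSet.{0}},
    (∀ n, v n ∈ HF) → t.evalIn HF v ∈ HF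
  | .var n, _, _, hv => hv n
  | .cls x _, .cls _ _ hφ hsafe, _, hv =>
    sep_mem_HF_of_finite_hfSolutions x hv (hsafe.finite_hfSolutions hφ hv)

theorem Safe.finite_hfSolutions : ∀ {φ : RFormula} {X : Finset ℕ}, Safe φ X → WFForm φ →
    ∀ {v : ℕ → ZFSet.{0}}, (∀ n, v n ∈ HF) → (hfSolutions φ X v).Finite
  | _, _, .atom_mem .., _, _, _ | _, _, .atom_eq .., _, _, _ | _, _, .not .., _, _, _ =>
    finite_hfSolutions_empty
  | _, _, .eq_left x t hx, _, v, _ =>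
    finite_hfSolutions_singleton (Set.finite_singleton (t.evalIn HF v)) fun w hw =>
      t.evalIn_eq_of_mem_hfSolutions (Finset.disjoint_singleton_right.2 hx) hw ▸
        show w x = t.evalIn HF w from hw.2.2
  | _, _, .eq_right x t hx, _, v, _ =>
    finite_hfSolutions_singleton (Set.finite_singleton (t.evalIn HF v)) fun w hw =>
      t.evalIn_eq_of_mem_hfSolutions (Finset.disjoint_singleton_right.2 hx) hw ▸
        show w x = t.evalIn HF w from hw.2.2.symm
  | _, _, .mem_left x t hx, .mem _ ht, _, hv =>
    finite_hfSolutions_singleton (finite_of_mem_HF (RTerm.evalIn_mem_HF ht hv)) fun w hw =>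
      t.evalIn_eq_of_mem_hfSolutions (Finset.disjoint_singleton_right.2 hx) hw ▸
        show w x ∈ (t.evalIn HF w : Set ZFSet.{0}) from hw.2.2
  | _, _, .mem_self x, _, _, _ =>
    finite_hfSolutions_singleton Set.finite_empty fun _ hw => (ZFSet.mem_irrefl _ hw.2.2).elim
  | _, _, .or _ _ _ hφ hψ, .or wφ wψ, _, hv =>
    hfSolutions_or ▸ (hφ.finite_hfSolutions wφ hv).union (hψ.finite_hfSolutions wψ hv)
  | _, _, .and _ _ _ _ hφ hψ hY, .and wφ wψ, _, hv =>
    ((hφ.finite_hfSolutions wφ hv).biUnion fun _ hu => hψ.finite_hfSolutions wψ hu.2.1).subset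
      (hfSolutions_and_subset hv hY)
  | _, _, .ex _ _ _ hy hφ, .ex _ wφ, _, hv =>
    ((hφ.finite_hfSolutions wφ hv).image _).subset (hfSolutions_ex_subset hy)
end

/-- `HF` is a transitive model of RST: it is transitive and satisfies extensionality,
the comprehension schema for all `≻_RST`-safe formulas with parameters in `HF`
(the set `{x ∈ HF ∣ φ_HF}` is an element of `HF`), and the ∈-induction schema. -/
theorem hf_models_rst :
    HF.IsTransitive ∧
    (∀ x ∈ HF, ∀ y ∈ HF, (∀ z : ZFSet.{0}, z ∈ x ↔ z ∈ y) → x = y) ∧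
    (∀ (φ : RFormula) (x : ℕ) (v : ℕ → ZFSet.{0}), WFForm φ → Safe φ {x} →
      (∀ n, v n ∈ HF) →
        ZFSet.sep (fun z => RFormula.satIn HF φ (Function.update v x z)) HF ∈ HF) ∧
    (∀ (φ : RFormula) (i : ℕ) (v : ℕ → ZFSet.{0}), (∀ n, v n ∈ HF) →
      (∀ x ∈ HF, (∀ y ∈ x, RFormula.satIn HF φ (Function.update v i y)) →
        RFormula.satIn HF φ (Function.update v i x)) →
      ∀ x ∈ HF, RFormula.satIn HF φ (Function.update v i x)) :=
  ⟨isTransitive_HF,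
    fun _ _ _ _ => ZFSet.ext,
    fun _ x _ hφ hsafe hv =>
      sep_mem_HF_of_finite_hfSolutions x hv (hsafe.finite_hfSolutions hφ hv),
    fun _ _ _ _ => isTransitive_HF.mem_induction⟩
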